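/- arXiv:1912.06805 — 4 statements merged into one kernel-verified Lean document; each statement's English description precedes it below -/
import Mathlib

section
/- Let G : ℝⁿ → ℝ be convex differentiable and δᵢ > 0, H(x) = G(x) + Σᵢ δᵢ|xᵢ|. Define vectors β(x) and φ(x) componentwise: βᵢ(x) = ∇ᵢG(x)+δᵢ if xᵢ = 0 and ∇ᵢG(x)+δᵢ < 0; βᵢ(x) = ∇ᵢG(x)−δᵢ if xᵢ = 0 and ∇ᵢG(x)−δᵢ > 0; βᵢ(x) = 0 otherwise; φᵢ(x) = 0 if xᵢ = 0; φᵢ(x) = min{∇ᵢG(x)+δᵢ, max{xᵢ, ∇ᵢG(x)−δᵢ}} if xᵢ > 0; φᵢ(x) = max{∇ᵢG(x)−δᵢ, min{xᵢ, ∇ᵢG(x)+δᵢ}} if xᵢ < 0. Then if β(x̄) = 0 and φ(x̄) = 0, the point x̄ is a global minimizer of H. -/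
/-!
By convexity, `G y ≥ G x̄ + ⟪∇G(x̄), y - x̄⟫`, so it suffices that `-∇ᵢG(x̄)` be a subgradient of
`δᵢ |·|` at `x̄ᵢ` for every `i`. This is what `β(x̄) = φ(x̄) = 0` says coordinatewise: `φᵢ = 0` forces
`∇ᵢG(x̄) = -δᵢ` when `x̄ᵢ > 0` and `∇ᵢG(x̄) = δᵢ` when `x̄ᵢ < 0`, while `βᵢ = 0` forces
`|∇ᵢG(x̄)| ≤ δᵢ` when `x̄ᵢ = 0`.
-/

theorem ConvexOn.add_le_of_hasFDerivAt {E : Type*} [NormedAddCommGroup E] [NormedSpace ℝ E]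
    {s : Set E} {f : E → ℝ} {f' : E →L[ℝ] ℝ} {x y : E} (hf : ConvexOn ℝ s f)
    (hx : x ∈ s) (hy : y ∈ s) (hf' : HasFDerivAt f f' x) :
    f x + f' (y - x) ≤ f y := by
  set ℓ : ℝ →ᵃ[ℝ] E := AffineMap.lineMap x y
  have hderiv : HasDerivAt (f ∘ ℓ) (f' (y - x)) 0 :=
    (by simpa [ℓ] using hf' : HasFDerivAt f f' (ℓ 0)).comp_hasDerivAt 0
      (by simpa [ℓ] using AffineMap.hasDerivAt_lineMap (a := x) (b := y) (x := (0 : ℝ)))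
  have hslope := (hf.comp_affineMap ℓ).le_slope_of_hasDerivAt (x := 0) (y := 1)
    (by simpa [ℓ] using hx) (by simpa [ℓ] using hy) one_pos hderiv
  simp only [slope, ℓ, Function.comp_apply, AffineMap.lineMap_apply_zero,
    AffineMap.lineMap_apply_one, sub_zero, inv_one, smul_eq_mul, one_mul, vsub_eq_sub] at hslope
  linarith

theorem ConvexOn.add_inner_le_of_hasGradientAt {E : Type*} [NormedAddCommGroup E]
    [InnerProductSpace ℝ E] [CompleteSpace E]
    {s : Set E} {f : E → ℝ} {f' x y : E} (hf : ConvexOn ℝ s f)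
    (hx : x ∈ s) (hy : y ∈ s) (hf' : HasGradientAt f f' x) :
    f x + inner ℝ f' (y - x) ≤ f y :=
  hf.add_le_of_hasFDerivAt hx hy hf'.hasFDerivAt

/-- Coordinate `i` of `β(x)` is `l1Beta xᵢ (∇ᵢG(x)) δᵢ`. -/
noncomputable def l1Beta (a c d : ℝ) : ℝ :=
  if a = 0 ∧ c + d < 0 then c + d
  else if a = 0 ∧ c - d > 0 then c - d
  else 0

/-- Coordinate `i` of `φ(x)` is `l1Phi xᵢ (∇ᵢG(x)) δᵢ`. -/
noncomputable def l1Phi (a c d : ℝ) : ℝ :=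
  if a = 0 then 0
  else if 0 < a then min (c + d) (max a (c - d))
  else max (c - d) (min a (c + d))

section Coordinate

variable {a c d : ℝ}

theorem abs_le_of_l1Beta_eq_zero (h : l1Beta 0 c d = 0) : |c| ≤ d := by
  unfold l1Beta at h
  split_ifs at h with h₁ h₂
  · linarith [h₁.2]
  · linarith [h₂.2]
  · push Not at h₁ h₂
    exact abs_le.mpr ⟨by linarith [h₁ rfl], by linarith [h₂ rfl]⟩

theorem eq_neg_of_l1Phi_eq_zero (ha : 0 < a) (h : l1Phi a c d = 0) : c = -d := by
  rw [l1Phi, if_neg ha.ne', if_pos ha] at h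
  have : 0 < max a (c - d) := ha.trans_le (le_max_left _ _)
  rcases min_cases (c + d) (max a (c - d)) with ⟨h₁, -⟩ | ⟨h₁, -⟩ <;> linarith

theorem eq_of_l1Phi_eq_zero (ha : a < 0) (h : l1Phi a c d = 0) : c = d := by
  rw [l1Phi, if_neg ha.ne, if_neg ha.not_gt] at h
  have : min a (c + d) < 0 := (min_le_left _ _).trans_lt ha
  rcases max_cases (c - d) (min a (c + d)) with ⟨h₁, -⟩ | ⟨h₁, -⟩ <;> linarith

theorem mul_abs_le_of_l1Beta_eq_zero_of_l1Phi_eq_zero (hd : 0 ≤ d) (hβ : l1Beta a c d = 0)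
    (hφ : l1Phi a c d = 0) (b : ℝ) : d * |a| ≤ d * |b| + c * (b - a) := by
  rcases lt_trichotomy a 0 with ha | rfl | ha
  · rw [eq_of_l1Phi_eq_zero ha hφ, abs_of_neg ha]
    nlinarith [neg_abs_le b]
  · have hc := abs_le.mp (abs_le_of_l1Beta_eq_zero hβ)
    rcases le_total 0 b with hb | hb
    · rw [abs_zero, abs_of_nonneg hb]; nlinarith
    · rw [abs_zero, abs_of_nonpos hb]; nlinarith
  · rw [eq_neg_of_l1Phi_eq_zero ha hφ, abs_of_pos ha]
    nlinarith [le_abs_self b]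

end Coordinate

theorem beta_phi_zero_implies_minimizer {n : ℕ} (G : EuclideanSpace ℝ (Fin n) → ℝ)
    (g : EuclideanSpace ℝ (Fin n) → EuclideanSpace ℝ (Fin n))
    (δ : Fin n → ℝ) (hδ : ∀ i, 0 < δ i)
    (hG : ConvexOn ℝ Set.univ G)
    (hg : ∀ x, HasGradientAt G (g x) x)
    (xb : EuclideanSpace ℝ (Fin n)) (β φ : Fin n → ℝ)
    (hβ : ∀ i, β i =
      if xb i = 0 ∧ g xb i + δ i < 0 then g xb i + δ i
      else if xb i = 0 ∧ g xb i - δ i > 0 then g xb i - δ i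
      else 0)
    (hφ : ∀ i, φ i =
      if xb i = 0 then 0
      else if 0 < xb i then min (g xb i + δ i) (max (xb i) (g xb i - δ i))
      else max (g xb i - δ i) (min (xb i) (g xb i + δ i)))
    (hβ0 : ∀ i, β i = 0) (hφ0 : ∀ i, φ i = 0) :
    ∀ y, G xb + ∑ i, δ i * |xb i| ≤ G y + ∑ i, δ i * |y i| := by
  intro y
  have hcoord (i : Fin n) : δ i * |xb i| ≤ δ i * |y i| + g xb i * (y i - xb i) :=
    mul_abs_le_of_l1Beta_eq_zero_of_l1Phi_eq_zero (hδ i).le ((hβ i).symm.trans (hβ0 i))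
      ((hφ i).symm.trans (hφ0 i)) (y i)
  have hinner : inner ℝ (g xb) (y - xb) = ∑ i, g xb i * (y i - xb i) := by
    simp [PiLp.inner_apply, mul_comm]
  calc G xb + ∑ i, δ i * |xb i|
      ≤ G xb + ∑ i, (δ i * |y i| + g xb i * (y i - xb i)) := by gcongr with i; exact hcoord i
    _ = G xb + inner ℝ (g xb) (y - xb) + ∑ i, δ i * |y i| := by
      rw [Finset.sum_add_distrib, hinner]; ring
    _ ≤ G y + ∑ i, δ i * |y i| := by
      gcongr
      exact hG.add_inner_le_of_hasGradientAt (Set.mem_univ xb) (Set.mem_univ y) (hg xb)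
end

section
/- Under the setting of the previous item, suppose additionally x̂ minimizes Ĥ(x) = Ĝ(x) + Σᵢ δᵢ|xᵢ| with δᵢ > 0, and let θ₂ = (1/2) min over {i : x̂ᵢ = 0} of (δᵢ − |∇ᵢĜ(x̂)|), assumed strictly positive (nondegeneracy). If ‖xᵏ − x̂‖ ≤ θ₂/(2L̂) and ‖sᵏ − ŝ‖ ≤ θ₂/(2λ‖M‖), then |∇ᵢGᵏ(xᵏ)| ≤ δᵢ − θ₂ for every i with x̂ᵢ = 0. -/
/-!
The gradient of `Gᵏ` at `xᵏ` lies within `L̂ ‖xᵏ - x̂‖ + λ ‖M‖ ‖sᵏ - ŝ‖ ≤ θ₂` of the gradient of `Ĝ`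
at `x̂`, while on a zero index of `x̂` the definition of `θ₂` leaves the margin
`|∇ᵢĜ(x̂)| ≤ δᵢ - 2θ₂`.
-/

section PenalizedGradient

open ContinuousLinearMap

variable {E F : Type*} [NormedAddCommGroup E] [InnerProductSpace ℝ E] [CompleteSpace E]
  [NormedAddCommGroup F] [InnerProductSpace ℝ F] [CompleteSpace F]

theorem norm_penalizedGradient_sub_le {g : E → E} {L lam : ℝ} (hlam : 0 ≤ lam)
    (hg : ∀ x y, ‖g x - g y‖ ≤ L * ‖x - y‖) (M : E →L[ℝ] F) (x y : E) (s t : F) :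
    ‖(g x + lam • adjoint M (M x - s)) - (g y + lam • adjoint M (M y - t))‖ ≤
      (L + lam * ‖M‖ ^ 2) * ‖x - y‖ + lam * ‖M‖ * ‖s - t‖ := by
  have hsplit : (g x + lam • adjoint M (M x - s)) - (g y + lam • adjoint M (M y - t)) =
      (g x - g y) + lam • (adjoint M ∘L M) (x - y) + lam • adjoint M (t - s) := by
    simp only [ContinuousLinearMap.comp_apply, map_sub]
    module
  have hMM : ‖(adjoint M ∘L M) (x - y)‖ ≤ ‖M‖ ^ 2 * ‖x - y‖ := by
    simpa [sq, ContinuousLinearMap.norm_adjoint_comp_self] using (adjoint M ∘L M).le_opNorm (x - y)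
  have hMt : ‖adjoint M (t - s)‖ ≤ ‖M‖ * ‖s - t‖ := by
    simpa [norm_sub_rev t s] using (adjoint M).le_opNorm (t - s)
  rw [hsplit]
  calc _ ≤ ‖g x - g y‖ + ‖lam • (adjoint M ∘L M) (x - y)‖ + ‖lam • adjoint M (t - s)‖ :=
        norm_add₃_le
    _ ≤ L * ‖x - y‖ + lam * (‖M‖ ^ 2 * ‖x - y‖) + lam * (‖M‖ * ‖s - t‖) := by
      simp only [norm_smul, Real.norm_of_nonneg hlam]
      gcongr
      exact hg x y
    _ = _ := by ring

end PenalizedGradient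

theorem nonneg_of_norm_sub_le_mul_norm_sub {E F : Type*} [NormedAddCommGroup E]
    [SeminormedAddCommGroup F] {f : E → F} {L : ℝ} {x y : E} (hxy : x ≠ y)
    (hf : ‖f x - f y‖ ≤ L * ‖x - y‖) : 0 ≤ L :=
  nonneg_of_mul_nonneg_left ((norm_nonneg _).trans hf) (norm_pos_iff.mpr (sub_ne_zero.mpr hxy))

theorem mul_le_half_of_le_div {c x θ : ℝ} (hc : 0 ≤ c) (hθ : 0 ≤ θ) (hx : x ≤ θ / (2 * c)) :
    c * x ≤ θ / 2 := by
  rcases hc.eq_or_lt with rfl | hc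
  · rw [zero_mul]; positivity
  · calc c * x ≤ c * (θ / (2 * c)) := by gcongr
      _ = θ / 2 := by field_simp

theorem csInf_image_le_of_finite {ι : Type*} [Finite ι] {p : ι → Prop} (f : ι → ℝ) {i : ι}
    (hi : p i) : sInf {t : ℝ | ∃ j, p j ∧ t = f j} ≤ f i := by
  refine csInf_le ?_ ⟨i, hi, rfl⟩
  refine ((Set.finite_range f).subset ?_).bddBelow
  rintro t ⟨j, -, rfl⟩
  exact ⟨j, rfl⟩

theorem grad_bound_on_zero_indices_general {n m : ℕ}
    (gF : EuclideanSpace ℝ (Fin n) → EuclideanSpace ℝ (Fin n))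
    (L lam : ℝ) (hlam : 0 < lam)
    (M : EuclideanSpace ℝ (Fin n) →L[ℝ] EuclideanSpace ℝ (Fin m))
    (shat sk : EuclideanSpace ℝ (Fin m))
    (hLip : ∀ x y, ‖gF x - gF y‖ ≤ L * ‖x - y‖)
    (gGhat gGk : EuclideanSpace ℝ (Fin n) → EuclideanSpace ℝ (Fin n))
    (hgGhat : ∀ x, gGhat x = gF x + lam • (ContinuousLinearMap.adjoint M) (M x - shat))
    (hgGk : ∀ x, gGk x = gF x + lam • (ContinuousLinearMap.adjoint M) (M x - sk))
    (δ : Fin n → ℝ)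
    (xhat : EuclideanSpace ℝ (Fin n))
    (θ₂ : ℝ)
    (hθ₂ : θ₂ = (1 / 2) * sInf {t : ℝ | ∃ i, xhat i = 0 ∧ t = δ i - |gGhat xhat i|})
    (hθ₂pos : 0 < θ₂)
    (xk : EuclideanSpace ℝ (Fin n))
    (hxk : ‖xk - xhat‖ ≤ θ₂ / (2 * (L + lam * ‖M‖ ^ 2)))
    (hsk : ‖sk - shat‖ ≤ θ₂ / (2 * lam * ‖M‖)) :
    ∀ i, xhat i = 0 → |gGk xk i| ≤ δ i - θ₂ := by
  intro i hi
  have hgap : 2 * θ₂ ≤ δ i - |gGhat xhat i| := by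
    have := csInf_image_le_of_finite (p := fun j => xhat j = 0)
      (fun j => δ j - |gGhat xhat j|) hi
    rw [hθ₂]; linarith
  have hL : 0 ≤ L := nonneg_of_norm_sub_le_mul_norm_sub
    ((PiLp.single_eq_zero_iff 2 i).not.mpr one_ne_zero) (hLip _ 0)
  have hx : (L + lam * ‖M‖ ^ 2) * ‖xk - xhat‖ ≤ θ₂ / 2 :=
    mul_le_half_of_le_div (by positivity) hθ₂pos.le hxk
  have hs : lam * ‖M‖ * ‖sk - shat‖ ≤ θ₂ / 2 :=
    mul_le_half_of_le_div (by positivity) hθ₂pos.le (by rwa [← mul_assoc])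
  have hclose : ‖gGk xk - gGhat xhat‖ ≤ θ₂ := by
    rw [hgGk, hgGhat]
    linarith [norm_penalizedGradient_sub_le hlam.le hLip M xk xhat sk shat]
  have hcoord : |gGk xk i - gGhat xhat i| ≤ θ₂ :=
    (PiLp.norm_apply_le (gGk xk - gGhat xhat) i).trans hclose
  linarith [abs_sub_abs_le_abs_sub (gGk xk i) (gGhat xhat i)]

theorem grad_bound_on_zero_indices {n m : ℕ} (F : EuclideanSpace ℝ (Fin n) → ℝ)
    (gF : EuclideanSpace ℝ (Fin n) → EuclideanSpace ℝ (Fin n))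
    (L lam : ℝ) (hlam : 0 < lam)
    (M : EuclideanSpace ℝ (Fin n) →L[ℝ] EuclideanSpace ℝ (Fin m))
    (shat sk : EuclideanSpace ℝ (Fin m))
    (hF : ∀ x, HasGradientAt F (gF x) x)
    (hLip : ∀ x y, ‖gF x - gF y‖ ≤ L * ‖x - y‖)
    (gGhat gGk : EuclideanSpace ℝ (Fin n) → EuclideanSpace ℝ (Fin n))
    (hgGhat : ∀ x, gGhat x = gF x + lam • (ContinuousLinearMap.adjoint M) (M x - shat))
    (hgGk : ∀ x, gGk x = gF x + lam • (ContinuousLinearMap.adjoint M) (M x - sk))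
    (δ : Fin n → ℝ) (hδ : ∀ i, 0 < δ i)
    (xhat : EuclideanSpace ℝ (Fin n))
    (hmin : ∀ y, F xhat + (lam / 2) * ‖M xhat - shat‖ ^ 2 + ∑ i, δ i * |xhat i| ≤
                 F y + (lam / 2) * ‖M y - shat‖ ^ 2 + ∑ i, δ i * |y i|)
    (θ₂ : ℝ)
    (hθ₂ : θ₂ = (1 / 2) * sInf {t : ℝ | ∃ i, xhat i = 0 ∧ t = δ i - |gGhat xhat i|})
    (hθ₂pos : 0 < θ₂)
    (xk : EuclideanSpace ℝ (Fin n))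
    (hxk : ‖xk - xhat‖ ≤ θ₂ / (2 * (L + lam * ‖M‖ ^ 2)))
    (hsk : ‖sk - shat‖ ≤ θ₂ / (2 * lam * ‖M‖)) :
    ∀ i, xhat i = 0 → |gGk xk i| ≤ δ i - θ₂ :=
  grad_bound_on_zero_indices_general gF L lam hlam M shat sk hLip gGhat gGk hgGhat hgGk δ xhat θ₂
    hθ₂ hθ₂pos xk hxk hsk
end

section
/- Under the same hypotheses (‖xᵏ − x̂‖ ≤ min{θ₁/2, θ₂/(2L̂)} and ‖sᵏ − ŝ‖ ≤ θ₂/(2λ‖M‖)), the vector βᵏ(xᵏ) of optimality violations of the zero variables vanishes: βᵏ(xᵏ) = 0, where βᵏᵢ(x) = ∇ᵢGᵏ(x)+δᵢ if xᵢ=0 and ∇ᵢGᵏ(x)+δᵢ<0, βᵏᵢ(x) = ∇ᵢGᵏ(x)−δᵢ if xᵢ=0 and ∇ᵢGᵏ(x)−δᵢ>0, and 0 otherwise. -/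
/-!
Every coordinate of `x̂` that is nonzero has modulus at least `2θ₁`, so it stays nonzero within
distance `θ₁/2`: the zero coordinates of `xᵏ` are zero coordinates of `x̂`. At those, `x̂` satisfies
the optimality condition with margin `2θ₂`, i.e. `|∇ᵢĜ(x̂)| ≤ δᵢ - 2θ₂`, while the Lipschitz bound and
the radii of the two balls keep `‖∇Gᵏ(xᵏ) - ∇Ĝ(x̂)‖ ≤ θ₂`. Hence `|∇ᵢGᵏ(xᵏ)| < δᵢ` and no violation
is recorded.
-/

open ContinuousLinearMap

lemma EuclideanSpace.abs_apply_le_norm {ι : Type*} [Fintype ι] (v : EuclideanSpace ℝ ι) (i : ι) :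
    |v i| ≤ ‖v‖ := by
  simpa only [Real.norm_eq_abs] using PiLp.norm_apply_le v i

lemma csInf_setOf_exists_le_apply {ι : Type*} [Finite ι] {p : ι → Prop} (f : ι → ℝ) {i : ι}
    (hi : p i) : sInf {t | ∃ j, p j ∧ t = f j} ≤ f i := by
  have hsub : {t | ∃ j, p j ∧ t = f j} ⊆ Set.range f := by
    rintro t ⟨j, -, rfl⟩
    exact ⟨j, rfl⟩
  exact csInf_le ((Set.finite_range f).subset hsub).bddBelow ⟨i, hi, rfl⟩

lemma apply_eq_zero_of_norm_sub_le_quarter_min {ι : Type*} [Fintype ι]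
    {x xhat : EuclideanSpace ℝ ι} {θ : ℝ}
    (hθ : θ = (1 / 2) * sInf {t | ∃ i, xhat i ≠ 0 ∧ t = |xhat i|}) (hx : ‖x - xhat‖ ≤ θ / 2)
    {i : ι} (hxi : x i = 0) : xhat i = 0 := by
  by_contra hne
  have hmin := csInf_setOf_exists_le_apply (p := fun j => xhat j ≠ 0) (fun j => |xhat j|) hne
  have hcoord : |xhat i| ≤ ‖x - xhat‖ := by
    simpa [hxi] using EuclideanSpace.abs_apply_le_norm (x - xhat) i
  have hpos : 0 < |xhat i| := abs_pos.mpr hne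
  simp only at hmin
  linarith

/-- The gradient of `x ↦ F x + (λ/2)‖M x - s‖²` is `∇F x + λ M†(M x - s)`; this bounds its
joint variation in `x` and `s`. -/
lemma norm_sub_gradient_penalized_le {E F : Type*} [NormedAddCommGroup E] [InnerProductSpace ℝ E]
    [CompleteSpace E] [NormedAddCommGroup F] [InnerProductSpace ℝ F] [CompleteSpace F]
    {g : E → E} {L lam : ℝ} (hlam : 0 ≤ lam) (M : E →L[ℝ] F) {x x' : E}
    (hg : ‖g x - g x'‖ ≤ L * ‖x - x'‖) (s s' : F) :
    ‖(g x + lam • adjoint M (M x - s)) - (g x' + lam • adjoint M (M x' - s'))‖ ≤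
      (L + lam * ‖M‖ ^ 2) * ‖x - x'‖ + lam * ‖M‖ * ‖s - s'‖ := by
  have hsplit : (g x + lam • adjoint M (M x - s)) - (g x' + lam • adjoint M (M x' - s')) =
      (g x - g x') + lam • (adjoint M ∘L M) (x - x') - lam • adjoint M (s - s') := by
    simp only [comp_apply, map_sub]
    module
  have hMM : ‖(adjoint M ∘L M) (x - x')‖ ≤ ‖M‖ ^ 2 * ‖x - x'‖ := by
    simpa only [norm_adjoint_comp_self, sq] using (adjoint M ∘L M).le_opNorm (x - x')
  have hMs : ‖adjoint M (s - s')‖ ≤ ‖M‖ * ‖s - s'‖ := by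
    simpa only [LinearIsometryEquiv.norm_map] using (adjoint M).le_opNorm (s - s')
  rw [hsplit]
  calc _ ≤ ‖g x - g x'‖ + ‖lam • (adjoint M ∘L M) (x - x')‖ + ‖lam • adjoint M (s - s')‖ :=
        (norm_sub_le _ _).trans (by gcongr; exact norm_add_le _ _)
    _ ≤ L * ‖x - x'‖ + lam * (‖M‖ ^ 2 * ‖x - x'‖) + lam * (‖M‖ * ‖s - s'‖) := by
        simp only [norm_smul, Real.norm_eq_abs, abs_of_nonneg hlam]
        gcongr
    _ = _ := by ring

/-- Also true when `k ≤ 0`, where the division is junk. -/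
lemma mul_le_half_of_le_div_two_mul {k a θ : ℝ} (ha : 0 ≤ a) (hθ : 0 ≤ θ)
    (h : a ≤ θ / (2 * k)) : k * a ≤ θ / 2 := by
  rcases le_or_gt k 0 with hk | hk
  · nlinarith
  · rw [le_div_iff₀ (by positivity)] at h
    linarith

/-- `β` of the statement, coordinatewise: the violation of the optimality condition
`|gᵢ| ≤ δᵢ` at a zero coordinate `xᵢ = 0`. -/
noncomputable def zeroViolation (x g δ : ℝ) : ℝ :=
  if x = 0 ∧ g + δ < 0 then g + δ else if x = 0 ∧ g - δ > 0 then g - δ else 0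

lemma zeroViolation_eq_zero {x g δ : ℝ} (h : x = 0 → |g| ≤ δ) : zeroViolation x g δ = 0 := by
  unfold zeroViolation
  split_ifs with hneg hpos
  · linarith [(abs_le.mp (h hneg.1)).1]
  · linarith [(abs_le.mp (h hpos.1)).2]
  · rfl

theorem beta_vanishes_near_solution_general {n m : ℕ}
    (gF : EuclideanSpace ℝ (Fin n) → EuclideanSpace ℝ (Fin n))
    (L lam : ℝ) (hlam : 0 < lam)
    (M : EuclideanSpace ℝ (Fin n) →L[ℝ] EuclideanSpace ℝ (Fin m))
    (shat sk : EuclideanSpace ℝ (Fin m))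
    (hLip : ∀ x y, ‖gF x - gF y‖ ≤ L * ‖x - y‖)
    (gGhat gGk : EuclideanSpace ℝ (Fin n) → EuclideanSpace ℝ (Fin n))
    (hgGhat : ∀ x, gGhat x = gF x + lam • (ContinuousLinearMap.adjoint M) (M x - shat))
    (hgGk : ∀ x, gGk x = gF x + lam • (ContinuousLinearMap.adjoint M) (M x - sk))
    (δ : Fin n → ℝ)
    (xhat : EuclideanSpace ℝ (Fin n))
    (θ₁ θ₂ : ℝ)
    (hθ₁ : θ₁ = (1 / 2) * sInf {t : ℝ | ∃ i, xhat i ≠ 0 ∧ t = |xhat i|})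
    (hθ₂ : θ₂ = (1 / 2) * sInf {t : ℝ | ∃ i, xhat i = 0 ∧ t = δ i - |gGhat xhat i|})
    (hθ₂pos : 0 < θ₂)
    (xk : EuclideanSpace ℝ (Fin n))
    (hxk : ‖xk - xhat‖ ≤ min (θ₁ / 2) (θ₂ / (2 * (L + lam * ‖M‖ ^ 2))))
    (hsk : ‖sk - shat‖ ≤ θ₂ / (2 * lam * ‖M‖))
    (β : Fin n → ℝ)
    (hβ : ∀ i, β i =
      if xk i = 0 ∧ gGk xk i + δ i < 0 then gGk xk i + δ i
      else if xk i = 0 ∧ gGk xk i - δ i > 0 then gGk xk i - δ i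
      else 0) :
    ∀ i, β i = 0 := by
  have hgrad : ‖gGk xk - gGhat xhat‖ ≤ θ₂ := by
    rw [mul_assoc] at hsk
    calc ‖gGk xk - gGhat xhat‖
        ≤ (L + lam * ‖M‖ ^ 2) * ‖xk - xhat‖ + lam * ‖M‖ * ‖sk - shat‖ := by
          rw [hgGk, hgGhat]
          exact norm_sub_gradient_penalized_le hlam.le M (hLip xk xhat) sk shat
      _ ≤ θ₂ / 2 + θ₂ / 2 := add_le_add
          (mul_le_half_of_le_div_two_mul (norm_nonneg _) hθ₂pos.le (hxk.trans (min_le_right _ _)))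
          (mul_le_half_of_le_div_two_mul (norm_nonneg _) hθ₂pos.le hsk)
      _ = θ₂ := add_halves θ₂
  intro i
  rw [hβ i]
  refine zeroViolation_eq_zero fun hxk0 => ?_
  have hxhat0 : xhat i = 0 :=
    apply_eq_zero_of_norm_sub_le_quarter_min hθ₁ (hxk.trans (min_le_left _ _)) hxk0
  have hmargin := csInf_setOf_exists_le_apply (p := fun j => xhat j = 0)
    (fun j => δ j - |gGhat xhat j|) hxhat0
  have hcoord := EuclideanSpace.abs_apply_le_norm (gGk xk - gGhat xhat) i
  have htri := abs_sub_abs_le_abs_sub (gGk xk i) (gGhat xhat i)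
  simp only [PiLp.sub_apply] at hmargin hcoord
  linarith

theorem beta_vanishes_near_solution {n m : ℕ} (F : EuclideanSpace ℝ (Fin n) → ℝ)
    (gF : EuclideanSpace ℝ (Fin n) → EuclideanSpace ℝ (Fin n))
    (L lam : ℝ) (hlam : 0 < lam)
    (M : EuclideanSpace ℝ (Fin n) →L[ℝ] EuclideanSpace ℝ (Fin m))
    (shat sk : EuclideanSpace ℝ (Fin m))
    (hF : ∀ x, HasGradientAt F (gF x) x)
    (hLip : ∀ x y, ‖gF x - gF y‖ ≤ L * ‖x - y‖)
    (gGhat gGk : EuclideanSpace ℝ (Fin n) → EuclideanSpace ℝ (Fin n))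
    (hgGhat : ∀ x, gGhat x = gF x + lam • (ContinuousLinearMap.adjoint M) (M x - shat))
    (hgGk : ∀ x, gGk x = gF x + lam • (ContinuousLinearMap.adjoint M) (M x - sk))
    (δ : Fin n → ℝ) (hδ : ∀ i, 0 < δ i)
    (xhat : EuclideanSpace ℝ (Fin n)) (hne : xhat ≠ 0)
    (hmin : ∀ y, F xhat + (lam / 2) * ‖M xhat - shat‖ ^ 2 + ∑ i, δ i * |xhat i| ≤
                 F y + (lam / 2) * ‖M y - shat‖ ^ 2 + ∑ i, δ i * |y i|)
    (θ₁ θ₂ : ℝ)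
    (hθ₁ : θ₁ = (1 / 2) * sInf {t : ℝ | ∃ i, xhat i ≠ 0 ∧ t = |xhat i|})
    (hθ₂ : θ₂ = (1 / 2) * sInf {t : ℝ | ∃ i, xhat i = 0 ∧ t = δ i - |gGhat xhat i|})
    (hθ₂pos : 0 < θ₂)
    (xk : EuclideanSpace ℝ (Fin n))
    (hxk : ‖xk - xhat‖ ≤ min (θ₁ / 2) (θ₂ / (2 * (L + lam * ‖M‖ ^ 2))))
    (hsk : ‖sk - shat‖ ≤ θ₂ / (2 * lam * ‖M‖))
    (β : Fin n → ℝ)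
    (hβ : ∀ i, β i =
      if xk i = 0 ∧ gGk xk i + δ i < 0 then gGk xk i + δ i
      else if xk i = 0 ∧ gGk xk i - δ i > 0 then gGk xk i - δ i
      else 0) :
    ∀ i, β i = 0 :=
  beta_vanishes_near_solution_general gF L lam hlam M shat sk hLip gGhat gGk hgGhat hgGk δ xhat θ₁
    θ₂ hθ₁ hθ₂ hθ₂pos xk hxk hsk β hβ
end

section
/- In the exact Bregman iteration for min K(x) subject to Mx = s, defined by x^{k+1} = argmin_x K(x) + (λ/2)‖Mx − sᵏ‖² and s^{k+1} = sᵏ + s − Mx^{k+1}, the constraint violation is monotonically nonincreasing: ‖Mx^{k+1} − s‖ ≤ ‖Mxᵏ − s‖ for all k. -/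
/-!
If `x` minimizes `K y + (λ/2)‖M y - c‖²` with `K` convex, then, differentiating along the
segment from `x` to any `y`, `K y - K x + λ⟪M x - c, M y - M x⟫ ≥ 0`. Applying this to two consecutive
iterates and adding, the values of `K` cancel and, since `s^{k+1} - s^k = s - M x^{k+1}`, what remains is
`⟪v, u - v⟫ ≥ 0` for `u = M x^{k+1} - s`, `v = M x^{k+2} - s`; by Cauchy–Schwarz `‖v‖ ≤ ‖u‖`.
-/

open Filter Topology RealInnerProductSpace

lemma nonneg_of_forall_Ioc_nonneg_add_mul {a b : ℝ}
    (h : ∀ t ∈ Set.Ioc (0 : ℝ) 1, 0 ≤ a + t * b) : 0 ≤ a := by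
  have hlim : Tendsto (fun t : ℝ => a + t * b) (𝓝[>] 0) (𝓝 a) := by
    have hcont : Continuous fun t : ℝ => a + t * b := by fun_prop
    simpa using (hcont.tendsto 0).mono_left nhdsWithin_le_nhds
  exact ge_of_tendsto hlim (eventually_of_mem (Ioc_mem_nhdsGT zero_lt_one) h)

lemma norm_le_of_inner_sub_nonneg {F : Type*} [NormedAddCommGroup F] [InnerProductSpace ℝ F]
    {u v : F} (h : 0 ≤ ⟪v, u - v⟫) : ‖v‖ ≤ ‖u‖ := by
  have hsq : ‖v‖ ^ 2 ≤ ‖v‖ * ‖u‖ := by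
    rw [inner_sub_right, real_inner_self_eq_norm_sq] at h
    linarith [real_inner_le_norm v u]
  nlinarith [norm_nonneg v, norm_nonneg u]

section Bregman

variable {E F : Type*} [AddCommGroup E] [Module ℝ E] [NormedAddCommGroup F] [InnerProductSpace ℝ F]
  {K : E → ℝ} {M : E →ₗ[ℝ] F} {lam : ℝ}

lemma ConvexOn.variational_inequality_of_isMinOn_add_sq_norm (hK : ConvexOn ℝ Set.univ K)
    {c : F} {x : E} (hx : IsMinOn (fun y => K y + lam / 2 * ‖M y - c‖ ^ 2) Set.univ x) (y : E) :
    0 ≤ K y - K x + lam * ⟪M x - c, M y - M x⟫ := by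
  set w := M x - c
  set d := M y - M x
  refine nonneg_of_forall_Ioc_nonneg_add_mul (b := lam / 2 * ‖d‖ ^ 2) fun t ⟨ht0, ht1⟩ => ?_
  have hconv : K (x + t • (y - x)) ≤ K x + t * (K y - K x) := by
    have h := hK.2 (Set.mem_univ x) (Set.mem_univ y) (sub_nonneg.2 ht1) ht0.le (by ring)
    rw [show x + t • (y - x) = (1 - t) • x + t • y by module]
    exact h.trans_eq (by simp only [smul_eq_mul]; ring)
  have hseg : M (x + t • (y - x)) - c = w + t • d := by
    simp only [w, d, map_add, map_smul, map_sub]; abel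
  have hexpand : ‖w + t • d‖ ^ 2 = ‖w‖ ^ 2 + 2 * t * ⟪w, d⟫ + t ^ 2 * ‖d‖ ^ 2 := by
    rw [norm_add_sq_real, real_inner_smul_right, norm_smul, mul_pow, Real.norm_eq_abs, sq_abs]
    ring
  have hmin : K x + lam / 2 * ‖w‖ ^ 2 ≤
      K (x + t • (y - x)) + lam / 2 * ‖M (x + t • (y - x)) - c‖ ^ 2 :=
    hx (Set.mem_univ _)
  rw [hseg, hexpand] at hmin
  have : 0 ≤ t * (K y - K x + lam * ⟪w, d⟫ + t * (lam / 2 * ‖d‖ ^ 2)) := by nlinarith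
  exact nonneg_of_mul_nonneg_right (by linarith) ht0

lemma norm_sub_le_of_bregman_step (hK : ConvexOn ℝ Set.univ K) (hlam : 0 < lam) {s c : F}
    {x₁ x₂ : E}
    (hx₁ : IsMinOn (fun y => K y + lam / 2 * ‖M y - c‖ ^ 2) Set.univ x₁)
    (hx₂ : IsMinOn (fun y => K y + lam / 2 * ‖M y - (c + s - M x₁)‖ ^ 2) Set.univ x₂) :
    ‖M x₂ - s‖ ≤ ‖M x₁ - s‖ := by
  have h₁ := hK.variational_inequality_of_isMinOn_add_sq_norm hx₁ x₂
  have h₂ := hK.variational_inequality_of_isMinOn_add_sq_norm hx₂ x₁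
  apply norm_le_of_inner_sub_nonneg
  have hsum : ⟪M x₁ - c, M x₂ - M x₁⟫ + ⟪M x₂ - (c + s - M x₁), M x₁ - M x₂⟫ =
      ⟪M x₂ - s, M x₁ - s - (M x₂ - s)⟫ := by
    simp only [inner_sub_left, inner_sub_right, inner_add_left, real_inner_comm]
    ring
  have hlam_inner : 0 ≤ lam * ⟪M x₂ - s, M x₁ - s - (M x₂ - s)⟫ := by
    rw [← hsum]; linarith
  exact nonneg_of_mul_nonneg_right hlam_inner hlam

end Bregman

theorem bregman_constraint_violation_nonincreasing_general {n m : ℕ}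
    (K : EuclideanSpace ℝ (Fin n) → ℝ)
    (hK : ConvexOn ℝ Set.univ K)
    (M : EuclideanSpace ℝ (Fin n) →L[ℝ] EuclideanSpace ℝ (Fin m))
    (s : EuclideanSpace ℝ (Fin m)) (lam : ℝ) (hlam : 0 < lam)
    (x : ℕ → EuclideanSpace ℝ (Fin n))
    (sSeq : ℕ → EuclideanSpace ℝ (Fin m))
    (hmin : ∀ k, ∀ y, K (x (k + 1)) + (lam / 2) * ‖M (x (k + 1)) - sSeq k‖ ^ 2 ≤
                      K y + (lam / 2) * ‖M y - sSeq k‖ ^ 2)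
    (hupd : ∀ k, sSeq (k + 1) = sSeq k + s - M (x (k + 1))) :
    ∀ k, ‖M (x (k + 2)) - s‖ ≤ ‖M (x (k + 1)) - s‖ := by
  intro k
  refine norm_sub_le_of_bregman_step (M := M.toLinearMap) hK hlam (fun y _ => hmin k y)
    fun y _ => ?_
  have hnext := hmin (k + 1) y
  rw [hupd k] at hnext
  exact hnext

theorem bregman_constraint_violation_nonincreasing {n m : ℕ}
    (K : EuclideanSpace ℝ (Fin n) → ℝ)
    (hK : ConvexOn ℝ Set.univ K) (hKlsc : LowerSemicontinuous K)
    (M : EuclideanSpace ℝ (Fin n) →L[ℝ] EuclideanSpace ℝ (Fin m))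
    (s : EuclideanSpace ℝ (Fin m)) (lam : ℝ) (hlam : 0 < lam)
    (x : ℕ → EuclideanSpace ℝ (Fin n))
    (sSeq : ℕ → EuclideanSpace ℝ (Fin m))
    (hmin : ∀ k, ∀ y, K (x (k + 1)) + (lam / 2) * ‖M (x (k + 1)) - sSeq k‖ ^ 2 ≤
                      K y + (lam / 2) * ‖M y - sSeq k‖ ^ 2)
    (hupd : ∀ k, sSeq (k + 1) = sSeq k + s - M (x (k + 1))) :
    ∀ k, ‖M (x (k + 2)) - s‖ ≤ ‖M (x (k + 1)) - s‖ :=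
  bregman_constraint_violation_nonincreasing_general K hK M s lam hlam x sSeq hmin hupd
end
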